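/- arXiv:2412.20495 — 4 statements merged into one kernel-verified Lean document; each statement's English description precedes it below -/
import Mathlib

section
/- (Utility loss bound, explicit-noise form) Let t_1 < … < t_M be event times with counts n_i > 0, 0 ≤ d_i ≤ n_i, and per-time noises ε_i ≥ 0. Then for every t, the utility loss ΔS(t) = |Ŝ_cent(t) − Ŝ_fed(t)| satisfies ΔS(t) ≤ ( ∏_{t_i ≤ t} (1 − d_i/n_i) ) · ∑_{t_i ≤ t} ε_i/(n_i + ε_i), where Ŝ_cent(t) = ∏_{t_i ≤ t} (1 − d_i/n_i) and Ŝ_fed(t) = ∏_{t_i ≤ t} (1 − (d_i + ε_i)/(n_i + ε_i)). -/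
/-!
Removing the noise `ε` from both counts factors each federated term as
`1 - (d + ε) / (n + ε) = (1 - d / n) * (1 - ε / (n + ε))`, so the federated estimator is the
centralized one times `∏ (1 - ε_i / (n_i + ε_i))`. The loss is therefore the centralized estimator
times `1 - ∏ (1 - c_i)` with `c_i ∈ [0, 1]`, and the Weierstrass product inequality bounds the
latter by `∑ c_i`.
-/

open Finset

section OrderedRing

variable {ι R : Type*} [CommRing R] [LinearOrder R] [IsStrictOrderedRing R]

theorem Finset.one_sub_prod_one_sub_le_sum (s : Finset ι) {c : ι → R}
    (hc0 : ∀ i ∈ s, 0 ≤ c i) (hc1 : ∀ i ∈ s, c i ≤ 1) :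
    1 - ∏ i ∈ s, (1 - c i) ≤ ∑ i ∈ s, c i := by
  classical
  induction s using Finset.induction_on with
  | empty => simp
  | insert j s hj ih =>
    rw [prod_insert hj, sum_insert hj]
    have hprod_le_one : ∏ i ∈ s, (1 - c i) ≤ 1 :=
      prod_le_one (fun i hi => sub_nonneg.2 (hc1 i (mem_insert_of_mem hi)))
        (fun i hi => sub_le_self _ (hc0 i (mem_insert_of_mem hi)))
    have hcj := hc0 j (mem_insert_self j s)
    have ih := ih (fun i hi => hc0 i (mem_insert_of_mem hi))
      (fun i hi => hc1 i (mem_insert_of_mem hi))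
    nlinarith

theorem Finset.abs_prod_sub_prod_mul_one_sub_le (s : Finset ι) {a c : ι → R}
    (ha : ∀ i ∈ s, 0 ≤ a i) (hc0 : ∀ i ∈ s, 0 ≤ c i) (hc1 : ∀ i ∈ s, c i ≤ 1) :
    |∏ i ∈ s, a i - ∏ i ∈ s, a i * (1 - c i)| ≤ (∏ i ∈ s, a i) * ∑ i ∈ s, c i := by
  have hdefect : 0 ≤ 1 - ∏ i ∈ s, (1 - c i) :=
    sub_nonneg.2 (prod_le_one (fun i hi => sub_nonneg.2 (hc1 i hi))
      (fun i hi => sub_le_self _ (hc0 i hi)))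
  rw [prod_mul_distrib, ← mul_one_sub, abs_of_nonneg (mul_nonneg (prod_nonneg ha) hdefect)]
  exact mul_le_mul_of_nonneg_left (s.one_sub_prod_one_sub_le_sum hc0 hc1) (prod_nonneg ha)

end OrderedRing

theorem one_sub_add_div_add_eq_mul {K : Type*} [Field K] {d n ε : K} (hn : n ≠ 0)
    (hnε : n + ε ≠ 0) :
    1 - (d + ε) / (n + ε) = (1 - d / n) * (1 - ε / (n + ε)) := by
  field_simp
  ring

theorem utility_loss_bound_explicit_general (M : ℕ) (τ d n ε : Fin M → ℝ)
    (hn : ∀ i, 0 < n i) (hdn : ∀ i, d i ≤ n i) (hε : ∀ i, 0 ≤ ε i) (t : ℝ) :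
    |(∏ i ∈ univ.filter (fun i => τ i ≤ t), (1 - d i / n i))
        - ∏ i ∈ univ.filter (fun i => τ i ≤ t), (1 - (d i + ε i) / (n i + ε i))|
      ≤ (∏ i ∈ univ.filter (fun i => τ i ≤ t), (1 - d i / n i))
        * ∑ i ∈ univ.filter (fun i => τ i ≤ t), ε i / (n i + ε i) := by
  have hnε : ∀ i, 0 < n i + ε i := fun i => add_pos_of_pos_of_nonneg (hn i) (hε i)
  rw [prod_congr rfl fun i _ => one_sub_add_div_add_eq_mul (d := d i) (hn i).ne' (hnε i).ne']
  refine abs_prod_sub_prod_mul_one_sub_le _ (fun i _ => ?_) (fun i _ => ?_) (fun i _ => ?_)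
  · exact sub_nonneg.2 ((div_le_one (hn i)).2 (hdn i))
  · exact div_nonneg (hε i) (hnε i).le
  · exact (div_le_one (hnε i)).2 (le_add_of_nonneg_left (hn i).le)

/-- Utility loss bound, explicit-noise form:
`ΔS(t) ≤ (∏_{t_i ≤ t} (1 − d_i/n_i)) · ∑_{t_i ≤ t} ε_i/(n_i + ε_i)`. -/
theorem utility_loss_bound_explicit (M : ℕ) (τ d n ε : Fin M → ℝ)
    (hτ : StrictMono τ) (hn : ∀ i, 0 < n i) (hd0 : ∀ i, 0 ≤ d i)
    (hdn : ∀ i, d i ≤ n i) (hε : ∀ i, 0 ≤ ε i) (t : ℝ) :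
    |(∏ i ∈ univ.filter (fun i => τ i ≤ t), (1 - d i / n i))
        - ∏ i ∈ univ.filter (fun i => τ i ≤ t), (1 - (d i + ε i) / (n i + ε i))|
      ≤ (∏ i ∈ univ.filter (fun i => τ i ≤ t), (1 - d i / n i))
        * ∑ i ∈ univ.filter (fun i => τ i ≤ t), ε i / (n i + ε i) :=
  utility_loss_bound_explicit_general M τ d n ε hn hdn hε t
end

section
/- (Simplified utility loss bound) Let t_1 < … < t_M be event times with counts n_i > 0, 0 ≤ d_i ≤ n_i, and per-time noises ε_i ≥ 0. Then for every t, |Ŝ_cent(t) − Ŝ_fed(t)| ≤ ∑_{t_i ≤ t} ε_i/n_i, where Ŝ_cent(t) = ∏_{t_i ≤ t} (1 − d_i/n_i) and Ŝ_fed(t) = ∏_{t_i ≤ t} (1 − (d_i + ε_i)/(n_i + ε_i)). -/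
open Finset

lemma abs_prod_sub_prod_le_sum {ι : Type*} [DecidableEq ι] (s : Finset ι) (f g : ι → ℝ)
    (hf0 : ∀ i ∈ s, 0 ≤ f i) (hf1 : ∀ i ∈ s, f i ≤ 1)
    (hg0 : ∀ i ∈ s, 0 ≤ g i) (hg1 : ∀ i ∈ s, g i ≤ 1) :
    |∏ i ∈ s, f i - ∏ i ∈ s, g i| ≤ ∑ i ∈ s, |f i - g i| := by
  induction s using Finset.induction_on with
  | empty => simp
  | insert _ _ ha ih =>
    rename_i a s
    simp only [prod_insert ha, sum_insert ha]
    have h0f : 0 ≤ f a := hf0 a (mem_insert_self a s)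
    have h1f : f a ≤ 1 := hf1 a (mem_insert_self a s)
    have hPf0 : 0 ≤ ∏ i ∈ s, f i :=
      prod_nonneg fun i hi => hf0 i (mem_insert_of_mem hi)
    have hPg0 : 0 ≤ ∏ i ∈ s, g i :=
      prod_nonneg fun i hi => hg0 i (mem_insert_of_mem hi)
    have hPg1 : ∏ i ∈ s, g i ≤ 1 :=
      prod_le_one (fun i hi => hg0 i (mem_insert_of_mem hi))
        (fun i hi => hg1 i (mem_insert_of_mem hi))
    have key : f a * ∏ i ∈ s, f i - g a * ∏ i ∈ s, g i
        = f a * (∏ i ∈ s, f i - ∏ i ∈ s, g i) + (f a - g a) * ∏ i ∈ s, g i := by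
      ring
    rw [key]
    calc |f a * (∏ i ∈ s, f i - ∏ i ∈ s, g i) + (f a - g a) * ∏ i ∈ s, g i|
        ≤ |f a * (∏ i ∈ s, f i - ∏ i ∈ s, g i)| + |(f a - g a) * ∏ i ∈ s, g i| :=
          abs_add_le _ _
      _ = f a * |∏ i ∈ s, f i - ∏ i ∈ s, g i| + |f a - g a| * ∏ i ∈ s, g i := by
          rw [abs_mul, abs_mul, abs_of_nonneg h0f, abs_of_nonneg hPg0]
      _ ≤ 1 * |∏ i ∈ s, f i - ∏ i ∈ s, g i| + |f a - g a| * 1 :=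
          add_le_add (mul_le_mul_of_nonneg_right h1f (abs_nonneg _))
            (mul_le_mul_of_nonneg_left hPg1 (abs_nonneg _))
      _ = |∏ i ∈ s, f i - ∏ i ∈ s, g i| + |f a - g a| := by ring
      _ ≤ (∑ i ∈ s, |f i - g i|) + |f a - g a| := by
          gcongr
          exact ih (fun i hi => hf0 i (mem_insert_of_mem hi))
            (fun i hi => hf1 i (mem_insert_of_mem hi))
            (fun i hi => hg0 i (mem_insert_of_mem hi))
            (fun i hi => hg1 i (mem_insert_of_mem hi))
      _ = |f a - g a| + ∑ i ∈ s, |f i - g i| := by ring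

/-- Simplified utility loss bound: `|Ŝ_cent(t) − Ŝ_fed(t)| ≤ ∑_{t_i ≤ t} ε_i/n_i`. -/
theorem utility_loss_bound_simplified (M : ℕ) (τ d n ε : Fin M → ℝ)
    (hτ : StrictMono τ) (hn : ∀ i, 0 < n i) (hd0 : ∀ i, 0 ≤ d i)
    (hdn : ∀ i, d i ≤ n i) (hε : ∀ i, 0 ≤ ε i) (t : ℝ) :
    |(∏ i ∈ univ.filter (fun i => τ i ≤ t), (1 - d i / n i))
        - ∏ i ∈ univ.filter (fun i => τ i ≤ t), (1 - (d i + ε i) / (n i + ε i))|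
      ≤ ∑ i ∈ univ.filter (fun i => τ i ≤ t), ε i / n i := by
  have hne : ∀ i, n i + ε i > 0 := fun i => by linarith [hn i, hε i]
  calc |(∏ i ∈ univ.filter (fun i => τ i ≤ t), (1 - d i / n i))
        - ∏ i ∈ univ.filter (fun i => τ i ≤ t), (1 - (d i + ε i) / (n i + ε i))|
      ≤ ∑ i ∈ univ.filter (fun i => τ i ≤ t),
          |(1 - d i / n i) - (1 - (d i + ε i) / (n i + ε i))| := by
        apply abs_prod_sub_prod_le_sum
        · intro i _
          have : d i / n i ≤ 1 := div_le_one_of_le₀ (hdn i) (hn i).le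
          linarith
        · intro i _
          have : 0 ≤ d i / n i := div_nonneg (hd0 i) (hn i).le
          linarith
        · intro i _
          have : (d i + ε i) / (n i + ε i) ≤ 1 :=
            div_le_one_of_le₀ (by linarith [hdn i]) (hne i).le
          linarith
        · intro i _
          have : 0 ≤ (d i + ε i) / (n i + ε i) :=
            div_nonneg (by linarith [hd0 i, hε i]) (hne i).le
          linarith
    _ ≤ ∑ i ∈ univ.filter (fun i => τ i ≤ t), ε i / n i := by
        apply sum_le_sum
        intro i _
        have hn0 : n i ≠ 0 := (hn i).ne'
        have hne0 : n i + ε i ≠ 0 := (hne i).ne'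
        have h1 : (1 - d i / n i) - (1 - (d i + ε i) / (n i + ε i))
            = ε i * (n i - d i) / (n i * (n i + ε i)) := by
          field_simp
          ring
        rw [h1, abs_of_nonneg (div_nonneg (mul_nonneg (hε i) (by linarith [hdn i]))
          (mul_pos (hn i) (hne i)).le)]
        rw [div_le_div_iff₀ (mul_pos (hn i) (hne i)) (hn i)]
        nlinarith [mul_nonneg (hε i) (hd0 i), hn i, hε i, hd0 i,
          mul_nonneg (mul_nonneg (hε i) (hd0 i)) (hn i).le,
          mul_nonneg (mul_nonneg (hε i) (hε i)) (hn i).le]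
end

section
/- (Utility loss bound for bounded at-risk counts) Let t_1 < … < t_M be event times with counts n_i ≥ c for some constant c > 0, 0 ≤ d_i ≤ n_i, and per-time noises ε_i ≥ 0. Then for every t, |Ŝ_cent(t) − Ŝ_fed(t)| ≤ (1/c) · ∑_{t_i ≤ t} ε_i / (1 + ε_i/n_i), where Ŝ_cent(t) = ∏_{t_i ≤ t} (1 − d_i/n_i) and Ŝ_fed(t) = ∏_{t_i ≤ t} (1 − (d_i + ε_i)/(n_i + ε_i)). -/
/-!
Every factor `1 - d/n` and `1 - (d+ε)/(n+ε)` lies in `[0, 1]`, so telescoping the two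
products bounds their difference by the sum of the factorwise differences. Each of these equals
`ε/(n+ε) · (1 - d/n) ≤ ε/(n+ε) = ε/(1 + ε/n) / n`, and `1/n ≤ 1/c`.
-/

open Finset

theorem Finset.norm_prod_sub_prod_le_sum_norm_sub {ι R : Type*} [NormedCommRing R]
    [NormOneClass R] (s : Finset ι) {a b : ι → R} (ha : ∀ i ∈ s, ‖a i‖ ≤ 1)
    (hb : ∀ i ∈ s, ‖b i‖ ≤ 1) :
    ‖∏ i ∈ s, a i - ∏ i ∈ s, b i‖ ≤ ∑ i ∈ s, ‖a i - b i‖ := by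
  classical
  induction s using Finset.induction_on with
  | empty => simp
  | @insert j s hj ih =>
    simp only [forall_mem_insert] at ha hb
    rw [prod_insert hj, prod_insert hj, sum_insert hj]
    have hprod_b : ‖∏ i ∈ s, b i‖ ≤ 1 := (Finset.norm_prod_le _ _).trans (prod_le_one
      (fun _ _ => norm_nonneg _) hb.2)
    calc ‖a j * ∏ i ∈ s, a i - b j * ∏ i ∈ s, b i‖
        = ‖a j * (∏ i ∈ s, a i - ∏ i ∈ s, b i) + (a j - b j) * ∏ i ∈ s, b i‖ := by
          ring_nf
      _ ≤ ‖a j‖ * ‖∏ i ∈ s, a i - ∏ i ∈ s, b i‖ + ‖a j - b j‖ * ‖∏ i ∈ s, b i‖ :=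
          (norm_add_le _ _).trans (add_le_add (norm_mul_le _ _) (norm_mul_le _ _))
      _ ≤ 1 * ∑ i ∈ s, ‖a i - b i‖ + ‖a j - b j‖ * 1 := by
          gcongr
          exacts [ha.1, ih ha.2 hb.2]
      _ = ‖a j - b j‖ + ∑ i ∈ s, ‖a i - b i‖ := by ring

theorem abs_one_sub_div_le_one {x y : ℝ} (hx : 0 ≤ x) (hxy : x ≤ y) : |1 - x / y| ≤ 1 := by
  have h0 : 0 ≤ x / y := div_nonneg hx (hx.trans hxy)
  have h1 : x / y ≤ 1 := div_le_one_of_le₀ hxy (hx.trans hxy)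
  rw [abs_le]
  constructor <;> linarith

theorem abs_sub_one_sub_div_add_le {d n ε : ℝ} (hd : 0 ≤ d) (hdn : d ≤ n) (hn : 0 < n)
    (hε : 0 ≤ ε) : |(1 - d / n) - (1 - (d + ε) / (n + ε))| ≤ ε / (n + ε) := by
  have hnε : 0 < n + ε := by linarith
  have hdiff : (1 - d / n) - (1 - (d + ε) / (n + ε)) = ε / (n + ε) * (1 - d / n) := by
    field_simp
    ring
  rw [hdiff, abs_mul, abs_of_nonneg (div_nonneg hε hnε.le)]
  exact mul_le_of_le_one_right (div_nonneg hε hnε.le) (abs_one_sub_div_le_one hd hdn)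

theorem div_add_le_one_div_mul_div_one_add_div {n ε c : ℝ} (hc : 0 < c) (hcn : c ≤ n)
    (hε : 0 ≤ ε) : ε / (n + ε) ≤ 1 / c * (ε / (1 + ε / n)) := by
  have hn : 0 < n := hc.trans_le hcn
  have hnε : 0 < n + ε := by linarith
  have hrhs : 1 / c * (ε / (1 + ε / n)) = n / c * (ε / (n + ε)) := by
    field_simp
  rw [hrhs]
  exact le_mul_of_one_le_left (div_nonneg hε hnε.le) ((one_le_div hc).2 hcn)

theorem utility_loss_bound_bounded_at_risk_general (M : ℕ) (τ d n ε : Fin M → ℝ) (c : ℝ)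
    (hc : 0 < c) (hn : ∀ i, c ≤ n i) (hd0 : ∀ i, 0 ≤ d i)
    (hdn : ∀ i, d i ≤ n i) (hε : ∀ i, 0 ≤ ε i) (t : ℝ) :
    |(∏ i ∈ univ.filter (fun i => τ i ≤ t), (1 - d i / n i))
        - ∏ i ∈ univ.filter (fun i => τ i ≤ t), (1 - (d i + ε i) / (n i + ε i))|
      ≤ (1 / c) * ∑ i ∈ univ.filter (fun i => τ i ≤ t), ε i / (1 + ε i / n i) := by
  have hn0 (i) : 0 < n i := hc.trans_le (hn i)
  rw [mul_sum]
  calc _ ≤ ∑ i ∈ univ.filter (fun i => τ i ≤ t),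
          |(1 - d i / n i) - (1 - (d i + ε i) / (n i + ε i))| :=
by
        simpa only [Real.norm_eq_abs] using norm_prod_sub_prod_le_sum_norm_sub _
          (a := fun i => 1 - d i / n i) (b := fun i => 1 - (d i + ε i) / (n i + ε i))
          (fun i _ => abs_one_sub_div_le_one (hd0 i) (hdn i))
          (fun i _ => abs_one_sub_div_le_one (add_nonneg (hd0 i) (hε i))
            (add_le_add_left (hdn i) _))
    _ ≤ ∑ i ∈ univ.filter (fun i => τ i ≤ t), ε i / (n i + ε i) :=
        sum_le_sum fun i _ => abs_sub_one_sub_div_add_le (hd0 i) (hdn i) (hn0 i) (hε i)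
    _ ≤ _ := sum_le_sum fun i _ => div_add_le_one_div_mul_div_one_add_div hc (hn i) (hε i)

/-- Utility loss bound for bounded at-risk counts `n_i ≥ c > 0`:
`|Ŝ_cent(t) − Ŝ_fed(t)| ≤ (1/c) · ∑_{t_i ≤ t} ε_i / (1 + ε_i/n_i)`. -/
theorem utility_loss_bound_bounded_at_risk (M : ℕ) (τ d n ε : Fin M → ℝ) (c : ℝ)
    (hτ : StrictMono τ) (hc : 0 < c) (hn : ∀ i, c ≤ n i) (hd0 : ∀ i, 0 ≤ d i)
    (hdn : ∀ i, d i ≤ n i) (hε : ∀ i, 0 ≤ ε i) (t : ℝ) :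
    |(∏ i ∈ univ.filter (fun i => τ i ≤ t), (1 - d i / n i))
        - ∏ i ∈ univ.filter (fun i => τ i ≤ t), (1 - (d i + ε i) / (n i + ε i))|
      ≤ (1 / c) * ∑ i ∈ univ.filter (fun i => τ i ≤ t), ε i / (1 + ε i / n i) :=
  utility_loss_bound_bounded_at_risk_general M τ d n ε c hc hn hd0 hdn hε t
end

section
/- (Simplified bound for bounded at-risk counts) Let t_1 < … < t_M be event times with counts n_i ≥ c for some constant c > 0, 0 ≤ d_i ≤ n_i, and per-time noises ε_i ≥ 0. Then for every t, |Ŝ_cent(t) − Ŝ_fed(t)| ≤ (1/c) · ∑_{t_i ≤ t} ε_i, where Ŝ_cent(t) = ∏_{t_i ≤ t} (1 − d_i/n_i) and Ŝ_fed(t) = ∏_{t_i ≤ t} (1 − (d_i + ε_i)/(n_i + ε_i)). -/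
open Finset

lemma abs_prod_sub_prod_le {ι : Type*} (s : Finset ι) (a b : ι → ℝ)
    (ha0 : ∀ i ∈ s, 0 ≤ a i) (ha1 : ∀ i ∈ s, a i ≤ 1)
    (hb0 : ∀ i ∈ s, 0 ≤ b i) (hb1 : ∀ i ∈ s, b i ≤ 1) :
    |∏ i ∈ s, a i - ∏ i ∈ s, b i| ≤ ∑ i ∈ s, |a i - b i| := by
  classical
  induction s using Finset.induction_on with
  | empty => simp
  | @insert j s' hj ih =>
    rw [prod_insert hj, prod_insert hj, sum_insert hj]
    have hpa0 : 0 ≤ ∏ i ∈ s', a i :=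
      prod_nonneg fun i hi => ha0 i (mem_insert_of_mem hi)
    have hpa1 : ∏ i ∈ s', a i ≤ 1 :=
      prod_le_one (fun i hi => ha0 i (mem_insert_of_mem hi))
        (fun i hi => ha1 i (mem_insert_of_mem hi))
    have hbj0 : 0 ≤ b j := hb0 j (mem_insert_self j s')
    have hbj1 : b j ≤ 1 := hb1 j (mem_insert_self j s')
    have key : a j * ∏ i ∈ s', a i - b j * ∏ i ∈ s', b i
        = (a j - b j) * ∏ i ∈ s', a i + b j * (∏ i ∈ s', a i - ∏ i ∈ s', b i) := by ring
    rw [key]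
    calc |(a j - b j) * ∏ i ∈ s', a i + b j * (∏ i ∈ s', a i - ∏ i ∈ s', b i)|
        ≤ |(a j - b j) * ∏ i ∈ s', a i| + |b j * (∏ i ∈ s', a i - ∏ i ∈ s', b i)| :=
          abs_add_le _ _
      _ = |a j - b j| * ∏ i ∈ s', a i + b j * |∏ i ∈ s', a i - ∏ i ∈ s', b i| := by
          rw [abs_mul, abs_mul, abs_of_nonneg hpa0, abs_of_nonneg hbj0]
      _ ≤ |a j - b j| * 1 + 1 * |∏ i ∈ s', a i - ∏ i ∈ s', b i| := by
          gcongr <;> positivity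
      _ ≤ |a j - b j| + ∑ i ∈ s', |a i - b i| := by
          rw [mul_one, one_mul]
          exact add_le_add_right (ih (fun i hi => ha0 i (mem_insert_of_mem hi))
            (fun i hi => ha1 i (mem_insert_of_mem hi))
            (fun i hi => hb0 i (mem_insert_of_mem hi))
            (fun i hi => hb1 i (mem_insert_of_mem hi))) _

/-- Simplified bound for bounded at-risk counts `n_i ≥ c > 0`:
`|Ŝ_cent(t) − Ŝ_fed(t)| ≤ (1/c) · ∑_{t_i ≤ t} ε_i`. -/
theorem utility_loss_bound_bounded_at_risk_simplified (M : ℕ) (τ d n ε : Fin M → ℝ)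
    (c : ℝ) (hτ : StrictMono τ) (hc : 0 < c) (hn : ∀ i, c ≤ n i) (hd0 : ∀ i, 0 ≤ d i)
    (hdn : ∀ i, d i ≤ n i) (hε : ∀ i, 0 ≤ ε i) (t : ℝ) :
    |(∏ i ∈ univ.filter (fun i => τ i ≤ t), (1 - d i / n i))
        - ∏ i ∈ univ.filter (fun i => τ i ≤ t), (1 - (d i + ε i) / (n i + ε i))|
      ≤ (1 / c) * ∑ i ∈ univ.filter (fun i => τ i ≤ t), ε i := by
  have hn0 : ∀ i, 0 < n i := fun i => hc.trans_le (hn i)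
  have hne0 : ∀ i, 0 < n i + ε i := fun i => add_pos_of_pos_of_nonneg (hn0 i) (hε i)
  calc |(∏ i ∈ univ.filter (fun i => τ i ≤ t), (1 - d i / n i))
        - ∏ i ∈ univ.filter (fun i => τ i ≤ t), (1 - (d i + ε i) / (n i + ε i))|
      ≤ ∑ i ∈ univ.filter (fun i => τ i ≤ t), |(1 - d i / n i) - (1 - (d i + ε i) / (n i + ε i))| := by
        apply abs_prod_sub_prod_le
        · intro i _
          have : d i / n i ≤ 1 := (div_le_one (hn0 i)).2 (hdn i)
          linarith
        · intro i _
          have : 0 ≤ d i / n i := div_nonneg (hd0 i) (hn0 i).le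
          linarith
        · intro i _
          have : (d i + ε i) / (n i + ε i) ≤ 1 := (div_le_one (hne0 i)).2 (by linarith [hdn i])
          linarith
        · intro i _
          have : 0 ≤ (d i + ε i) / (n i + ε i) :=
            div_nonneg (by linarith [hd0 i, hε i]) (hne0 i).le
          linarith
    _ ≤ ∑ i ∈ univ.filter (fun i => τ i ≤ t), (1 / c) * ε i := by
        apply Finset.sum_le_sum
        intro i _
        have hdiff : (1 - d i / n i) - (1 - (d i + ε i) / (n i + ε i))
            = ε i * (n i - d i) / (n i * (n i + ε i)) := by
          field_simp [(hn0 i).ne', (hne0 i).ne']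
          ring
        rw [hdiff, abs_of_nonneg (by
          apply div_nonneg
          · exact mul_nonneg (hε i) (by linarith [hdn i])
          · exact mul_nonneg (hn0 i).le (hne0 i).le)]
        rw [div_le_iff₀ (mul_pos (hn0 i) (hne0 i))]
        have h1 : n i - d i ≤ n i + ε i := by linarith [hd0 i, hε i]
        have h2 : 1 / c * ε i * (n i * (n i + ε i)) = ε i * ((n i / c) * (n i + ε i)) := by ring
        rw [h2]
        apply mul_le_mul_of_nonneg_left _ (hε i)
        calc n i - d i ≤ 1 * (n i + ε i) := by linarith
          _ ≤ (n i / c) * (n i + ε i) := by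
              apply mul_le_mul_of_nonneg_right _ (hne0 i).le
              rw [le_div_iff₀ hc]; linarith [hn i]
    _ = (1 / c) * ∑ i ∈ univ.filter (fun i => τ i ≤ t), ε i := by rw [mul_sum]
end
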